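/- arXiv:1909.13532 — 2 statements merged into one kernel-verified Lean document; each statement's English description precedes it below -/
import Mathlib

section
/- Let G be a planar simple graph and let {u,v} be an edge of G with N(u) ∩ N(v) nonempty. Then the subgraph of G induced by {u,v} ∪ (N(u) ∩ N(v)) has exactly 3·|N(u) ∩ N(v)| edges if and only if the subgraph of G induced by N(u) ∩ N(v) is a path; equivalently, the induced subgraph on {u,v} ∪ (N(u) ∩ N(v)) is a maximal planar graph (a triangulation) if and only if G[N(u) ∩ N(v)] is a path. -/
open SimpleGraph

/-- `H` is a minor of `G`: there is a family of nonempty, connected, pairwise disjoint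
branch sets in `G`, one for each vertex of `H`, with an edge of `G` between the branch
sets of any two adjacent vertices of `H`. -/
def SimpleGraph.IsMinor {W V : Type*} (H : SimpleGraph W) (G : SimpleGraph V) : Prop :=
  ∃ f : W → Set V,
    (∀ w, (f w).Nonempty) ∧
    (∀ w, (G.induce (f w)).Connected) ∧
    (Pairwise fun w₁ w₂ => Disjoint (f w₁) (f w₂)) ∧
    ∀ ⦃w₁ w₂⦄, H.Adj w₁ w₂ → ∃ u ∈ f w₁, ∃ v ∈ f w₂, G.Adj u v

/-- A simple graph is planar iff (by Wagner's theorem) it has neither `K₅` nor `K₃,₃`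
as a minor. -/
def SimpleGraph.IsPlanar {V : Type*} (G : SimpleGraph V) : Prop :=
  ¬ (completeGraph (Fin 5)).IsMinor G ∧
    ¬ (completeBipartiteGraph (Fin 3) (Fin 3)).IsMinor G

/-- A graph is a path graph iff it is connected, acyclic and every vertex has degree at
most 2 (this includes the one-vertex path). -/
def SimpleGraph.IsPathGraph {W : Type*} (H : SimpleGraph W) : Prop :=
  H.Connected ∧ H.IsAcyclic ∧ ∀ x, (H.neighborSet x).ncard ≤ 2

/-!
Write `S = N(u) ∩ N(v)`. Every vertex of `S` is adjacent to both `u` and `v`, so the graph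
induced on `{u, v} ∪ S` has `2|S| + 1 + e(S)` edges, and the edge count `3|S|` says exactly
`e(S) = |S| - 1`. Planarity makes `G[S]` a linear forest: a cycle in `S` can be contracted
to a triangle, which together with `u` and `v` is a `K₅` minor, and a vertex `x ∈ S` with
three neighbours `a, b, c` in `S` gives a `K₃,₃` with sides `{u, v, x}` and `{a, b, c}`.
A forest on `|S|` vertices has `|S| - 1` edges exactly when it is connected, i.e. a path.
-/

theorem injective_triple_iff_ne {α : Type*} {x y z : α} :
    Function.Injective ![x, y, z] ↔ x ≠ y ∧ x ≠ z ∧ y ≠ z := by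
  rw [Matrix.vecCons, Fin.cons_injective_iff, injective_pair_iff_ne]
  simp only [Matrix.range_cons, Matrix.range_empty, Set.union_empty, Set.mem_union,
    Set.mem_singleton_iff, not_or]
  tauto

namespace SimpleGraph

variable {V W : Type*} {G : SimpleGraph V}

theorem ncard_edgeSet_induce (s : Set V) :
    (G.induce s).edgeSet.ncard = (G.edgeSet ∩ s.sym2).ncard := by
  have hpre : Sym2.map ((↑) : s → V) ⁻¹' (G.edgeSet ∩ s.sym2) = (G.induce s).edgeSet := by
    rw [Set.preimage_inter, ← Set.sym2_preimage, Subtype.coe_preimage_self, Set.sym2_univ,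
      Set.inter_univ]
    exact (Embedding.induce s).preimage_edgeSet
  have hrange : G.edgeSet ∩ s.sym2 ⊆ Set.range (Sym2.map ((↑) : s → V)) := by
    rw [← Set.image_univ, ← Set.sym2_univ, ← Set.sym2_image, Set.image_univ, Subtype.range_coe]
    exact Set.inter_subset_right
  rw [← hpre, Set.ncard_preimage_of_injective_subset_range
    (Sym2.map.injective Subtype.val_injective) hrange]

theorem ncard_edgeSet_induce_insert [Finite V] {s : Set V} {w : V} (hw : w ∉ s) :
    (G.induce (insert w s)).edgeSet.ncard =
      (G.induce s).edgeSet.ncard + (G.neighborSet w ∩ s).ncard := by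
  have hsplit : G.edgeSet ∩ (insert w s).sym2 =
      (fun x ↦ s(w, x)) '' (G.neighborSet w ∩ s) ∪ G.edgeSet ∩ s.sym2 := by
    ext e
    induction e using Sym2.ind with
    | _ x y =>
      simp only [Set.mem_inter_iff, Set.mem_union, Set.mem_image, mem_edgeSet,
        Set.mk_mem_sym2_iff, Set.mem_insert_iff, mem_neighborSet, Sym2.eq_iff]
      grind [G.adj_symm, SimpleGraph.irrefl]
  have hdisj : Disjoint ((fun x ↦ s(w, x)) '' (G.neighborSet w ∩ s)) (G.edgeSet ∩ s.sym2) := by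
    rw [Set.disjoint_left]
    rintro _ ⟨x, -, rfl⟩ ⟨-, hwx⟩
    exact hw (Set.mk_mem_sym2_iff.1 hwx).1
  rw [ncard_edgeSet_induce, ncard_edgeSet_induce, hsplit, Set.ncard_union_eq hdisj, add_comm,
    ← Set.ncard_image_of_injective _ (Sym2.mkEmbedding w).injective]
  rfl

theorem ncard_edgeSet_induce_pair_union_commonNeighbors [Finite V] {u v : V}
    (huv : G.Adj u v) :
    (G.induce ({u, v} ∪ G.commonNeighbors u v)).edgeSet.ncard =
      (G.induce (G.commonNeighbors u v)).edgeSet.ncard + 2 * (G.commonNeighbors u v).ncard + 1 := by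
  have hv : v ∉ G.commonNeighbors u v := G.notMem_commonNeighbors_right u v
  have hu : u ∉ insert v (G.commonNeighbors u v) := by
    rintro (h | h)
    · exact huv.ne h
    · exact G.notMem_commonNeighbors_left u v h
  have hNv : G.neighborSet v ∩ G.commonNeighbors u v = G.commonNeighbors u v :=
    Set.inter_eq_right.2 (G.commonNeighbors_subset_neighborSet_right u v)
  have hNu : G.neighborSet u ∩ insert v (G.commonNeighbors u v) =
      insert v (G.commonNeighbors u v) :=
    Set.inter_eq_right.2 (Set.insert_subset huv (G.commonNeighbors_subset_neighborSet_left u v))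
  rw [Set.insert_union, Set.singleton_union, ncard_edgeSet_induce_insert hu,
    ncard_edgeSet_induce_insert hv, hNv, hNu, Set.ncard_insert_of_notMem hv]
  ring

theorem IsAcyclic.connected_iff_ncard_edgeSet_add_one [Finite V] [Nonempty V]
    (hG : G.IsAcyclic) :
    G.Connected ↔ G.edgeSet.ncard + 1 = Nat.card V := by
  refine ⟨fun h ↦ (isTree_iff_connected_and_card.1 ⟨h, hG⟩).2, fun h ↦ ?_⟩
  obtain ⟨T, hGT, -, hT⟩ := connected_top.exists_isTree_le_of_le_of_isAcyclic le_top hG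
  have hcard : T.edgeSet.ncard ≤ G.edgeSet.ncard := by
    have := (isTree_iff_connected_and_card.1 hT).2
    rw [Nat.card_coe_set_eq] at this
    omega
  have hGT : G = T := edgeSet_injective <|
    Set.eq_of_subset_of_ncard_le (edgeSet_mono hGT) hcard (Set.toFinite _)
  exact hGT ▸ hT.connected

structure IsMinorModel (H : SimpleGraph W) (G : SimpleGraph V) (f : W → Set V) : Prop where
  nonempty : ∀ w, (f w).Nonempty
  connected : ∀ w, (G.induce (f w)).Connected
  pairwise_disjoint : Pairwise fun w₁ w₂ ↦ Disjoint (f w₁) (f w₂)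
  exists_adj : ∀ ⦃w₁ w₂⦄, H.Adj w₁ w₂ → ∃ x ∈ f w₁, ∃ y ∈ f w₂, G.Adj x y

theorem IsMinorModel.isMinor {H : SimpleGraph W} {f : W → Set V} (hf : IsMinorModel H G f) :
    H.IsMinor G :=
  ⟨f, hf.nonempty, hf.connected, hf.pairwise_disjoint, hf.exists_adj⟩

theorem connected_induce_singleton (x : V) : (G.induce {x}).Connected := by
  rw [induce_singleton_eq_top]
  exact connected_top

theorem isMinor_of_hom_injective {H : SimpleGraph W} (φ : H →g G) (hφ : Function.Injective φ) :
    H.IsMinor G :=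
  IsMinorModel.isMinor (f := fun w ↦ {φ w})
    { nonempty := fun _ ↦ Set.singleton_nonempty _
      connected := fun _ ↦ connected_induce_singleton _
      pairwise_disjoint := fun _ _ h ↦ Set.disjoint_singleton.2 (hφ.ne h)
      exists_adj := fun _ _ h ↦ ⟨_, rfl, _, rfl, φ.map_adj h⟩ }

theorem completeBipartiteGraph_isMinor_of_forall_adj {α β : Type*} {L : α → V} {R : β → V}
    (hL : Function.Injective L) (hR : Function.Injective R) (hLR : ∀ a b, G.Adj (L a) (R b)) :
    (completeBipartiteGraph α β).IsMinor G :=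
  isMinor_of_hom_injective
    { toFun := Sum.elim L R
      map_rel' := by
        rintro (a | a) (b | b) h
        · simp at h
        · exact hLR a b
        · exact (hLR b a).symm
        · simp at h }
    (hL.sumElim hR fun a b ↦ (hLR a b).ne)

theorem IsMinorModel.completeGraph_cons {n : ℕ} {f : Fin n → Set V}
    (hf : IsMinorModel (completeGraph (Fin n)) G f) {X : Set V} (hX : X.Nonempty)
    (hXc : (G.induce X).Connected) (hdisj : ∀ i, Disjoint X (f i))
    (hadj : ∀ i, ∃ x ∈ X, ∃ y ∈ f i, G.Adj x y) :
    IsMinorModel (completeGraph (Fin (n + 1))) G (Fin.cons X f) where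
  nonempty := Fin.cases hX hf.nonempty
  connected := Fin.cases hXc hf.connected
  pairwise_disjoint i j hij := by
    cases i using Fin.cases <;> cases j using Fin.cases
    · exact absurd rfl hij
    · exact hdisj _
    · exact (hdisj _).symm
    · exact hf.pairwise_disjoint (fun h ↦ hij (congrArg _ h))
  exists_adj i j hij := by
    cases i using Fin.cases <;> cases j using Fin.cases
    · exact absurd rfl hij
    · exact hadj _
    · obtain ⟨x, hx, y, hy, hxy⟩ := hadj _
      exact ⟨y, hy, x, hx, hxy.symm⟩
    · exact hf.exists_adj (fun h ↦ hij (congrArg _ h))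

theorem IsMinorModel.completeGraph_cons_apex {n : ℕ} {f : Fin n → Set V}
    (hf : IsMinorModel (completeGraph (Fin n)) G f) {S : Set V} (hfS : ∀ i, f i ⊆ S) {w : V}
    (hw : w ∉ S) (hwS : ∀ x ∈ S, G.Adj w x) :
    IsMinorModel (completeGraph (Fin (n + 1))) G (Fin.cons {w} f) :=
  hf.completeGraph_cons (Set.singleton_nonempty w) (connected_induce_singleton w)
    (fun i ↦ Set.disjoint_singleton_left.2 fun h ↦ hw (hfS i h))
    (fun i ↦ let ⟨y, hy⟩ := hf.nonempty i; ⟨w, rfl, y, hy, hwS y (hfS i hy)⟩)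

theorem Walk.IsCycle.exists_completeGraph_three_minorModel {a : V} {c : G.Walk a a}
    (hc : c.IsCycle) :
    ∃ f : Fin 3 → Set V, IsMinorModel (completeGraph (Fin 3)) G f ∧
      ∀ i, f i ⊆ {z | z ∈ c.support} := by
  cases c with
  | nil => exact absurd hc Walk.not_isCycle_nil
  | @cons _ b _ hab p =>
  cases p with
  | nil => exact absurd rfl hab.ne
  | @cons _ x _ hbx q =>
  cases q with
  | nil => exact absurd hc (by simp [Walk.cons_isCycle_iff])
  | @cons _ y _ hxy r =>
  -- `c` runs `a, b, x, y, …, a`: the branch sets are `{b}`, `{x}` and the rest `y, …, a`.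
  obtain ⟨⟨⟨-, hxr⟩, hbx', hbr⟩, -⟩ := by simpa [Walk.cons_isCycle_iff] using hc
  have hK0 : IsMinorModel (completeGraph (Fin 0)) G ![] :=
    ⟨finZeroElim, finZeroElim, fun i ↦ i.elim0, fun i ↦ i.elim0⟩
  have hK1 := hK0.completeGraph_cons ⟨y, r.start_mem_support⟩ r.connected_induce_support
    finZeroElim finZeroElim
  have hK2 := hK1.completeGraph_cons (Set.singleton_nonempty x) (connected_induce_singleton x)
    (by simpa [Fin.forall_fin_one] using hxr)
    (by simpa [Fin.forall_fin_one] using ⟨y, r.start_mem_support, hxy⟩)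
  have hK3 := hK2.completeGraph_cons (Set.singleton_nonempty b) (connected_induce_singleton b)
    (by simpa [Fin.forall_fin_two] using ⟨hbx', hbr⟩)
    (by simpa [Fin.forall_fin_two] using ⟨hbx, a, r.end_mem_support, hab.symm⟩)
  refine ⟨_, hK3, ?_⟩
  simp +contextual [Fin.forall_fin_succ, Set.subset_def]

theorem IsPlanar.isAcyclic_induce_commonNeighbors (hG : G.IsPlanar) {u v : V} (huv : G.Adj u v) :
    (G.induce (G.commonNeighbors u v)).IsAcyclic := by
  intro a c hc
  set S := G.commonNeighbors u v
  have hc' := hc.map (f := (Embedding.induce S).toHom) Subtype.val_injective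
  obtain ⟨f, hf, hfc⟩ := hc'.exists_completeGraph_three_minorModel
  have hfS : ∀ i, f i ⊆ S := fun i z hz ↦ by
    obtain ⟨z', -, rfl⟩ := List.mem_map.1 (Walk.support_map _ c ▸ hfc i hz)
    exact z'.2
  have hu : u ∉ insert v S := by
    rintro (h | h)
    · exact huv.ne h
    · exact G.notMem_commonNeighbors_left u v h
  have hK4 := hf.completeGraph_cons_apex hfS (G.notMem_commonNeighbors_right u v)
    fun x hx ↦ (G.mem_commonNeighbors.1 hx).2
  have hK5 := hK4.completeGraph_cons_apex (S := insert v S)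
    (Fin.cases (by simp) fun i ↦ (hfS i).trans (Set.subset_insert _ _)) hu
    (Set.forall_mem_insert.2 ⟨huv, fun x hx ↦ (G.mem_commonNeighbors.1 hx).1⟩)
  exact hG.1 hK5.isMinor

theorem IsPlanar.ncard_neighborSet_induce_commonNeighbors_le_two [Finite V] (hG : G.IsPlanar)
    {u v : V} (huv : u ≠ v) (x : G.commonNeighbors u v) :
    ((G.induce (G.commonNeighbors u v)).neighborSet x).ncard ≤ 2 := by
  by_contra! h
  obtain ⟨a, b, c, ha, hb, hc, hab, hac, hbc⟩ := (Set.two_lt_ncard_iff (Set.toFinite _)).1 h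
  have hx := G.mem_commonNeighbors.1 x.2
  have hAdj : ∀ y : G.commonNeighbors u v, G.Adj u y ∧ G.Adj v y :=
    fun y ↦ G.mem_commonNeighbors.1 y.2
  refine hG.2 (completeBipartiteGraph_isMinor_of_forall_adj (L := ![u, v, x])
    (R := Subtype.val ∘ ![a, b, c]) ?_ (Subtype.val_injective.comp ?_) ?_)
  · exact injective_triple_iff_ne.2 ⟨huv, hx.1.ne, hx.2.ne⟩
  · exact injective_triple_iff_ne.2 ⟨hab, hac, hbc⟩
  · simp only [Function.comp_apply, Fin.forall_fin_succ, Matrix.cons_val_zero,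
      Matrix.cons_val_succ, Matrix.cons_val_fin_one, forall_const, hAdj, and_self, true_and]
    exact ⟨ha, hb, hc⟩

end SimpleGraph

/-- If `G` is planar, `{u, v}` is an edge of `G` and `N(u) ∩ N(v)` is nonempty, then the
subgraph induced by `{u, v} ∪ (N(u) ∩ N(v))` has exactly `3 · |N(u) ∩ N(v)|` edges
(i.e. it is a triangulation, being a planar graph on `|N(u) ∩ N(v)| + 2` vertices) if
and only if the subgraph induced by `N(u) ∩ N(v)` is a path. -/
theorem common_nbhd_triangulation_iff_path {V : Type*} [Fintype V] (G : SimpleGraph V)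
    (hG : G.IsPlanar) (u v : V) (huv : G.Adj u v)
    (hne : (G.neighborSet u ∩ G.neighborSet v).Nonempty) :
    (G.induce ({u, v} ∪ G.neighborSet u ∩ G.neighborSet v)).edgeSet.ncard
        = 3 * (G.neighborSet u ∩ G.neighborSet v).ncard ↔
      (G.induce (G.neighborSet u ∩ G.neighborSet v)).IsPathGraph := by
  rw [← commonNeighbors_eq] at hne ⊢
  have : Nonempty (G.commonNeighbors u v) := hne.to_subtype
  have hacyc := hG.isAcyclic_induce_commonNeighbors huv
  rw [ncard_edgeSet_induce_pair_union_commonNeighbors huv, IsPathGraph,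
    hacyc.connected_iff_ncard_edgeSet_add_one, Nat.card_coe_set_eq]
  simp only [hacyc, hG.ncard_neighborSet_induce_commonNeighbors_le_two huv.ne, and_true,
    implies_true]
  omega
end

section
/- If G is a simple graph containing an edge {u,v} and a cycle all of whose vertices lie in N(u) ∩ N(v), then G contains K₅ as a minor; in particular G is not planar. -/
open SimpleGraph

/-! Cut the cycle after two consecutive vertices `w`, `x`: then `{w}`, `{x}` and the path through
the remaining cycle vertices are disjoint connected sets, pairwise joined by cycle edges, i.e. a
`K₃` model. All of it lies in `N(u) ∩ N(v)`, so adding `{v}` and then `{u}` yields a `K₅` model. -/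

namespace SimpleGraph

variable {V ι : Type*} {G : SimpleGraph V}

structure IsCliqueModel (G : SimpleGraph V) (f : ι → Set V) : Prop where
  nonempty : ∀ i, (f i).Nonempty
  connected : ∀ i, (G.induce (f i)).Connected
  disjoint : Pairwise fun i j => Disjoint (f i) (f j)
  exists_adj : Pairwise fun i j => ∃ a ∈ f i, ∃ b ∈ f j, G.Adj a b

theorem IsCliqueModel.completeGraph_isMinor {f : ι → Set V} (hf : G.IsCliqueModel f) :
    (completeGraph ι).IsMinor G :=
  ⟨f, hf.nonempty, hf.connected, hf.disjoint, fun _ _ h => hf.exists_adj h⟩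

theorem Walk.isCliqueModel_support [Subsingleton ι] {a b : V} (p : G.Walk a b) :
    G.IsCliqueModel fun _ : ι => {x | x ∈ p.support} where
  nonempty _ := ⟨a, p.start_mem_support⟩
  connected _ := p.connected_induce_support
  disjoint := Subsingleton.pairwise
  exists_adj := Subsingleton.pairwise

theorem IsCliqueModel.cons {n : ℕ} {f : Fin n → Set V} (hf : G.IsCliqueModel f) {u : V}
    (hu : ∀ i, u ∉ f i) (hadj : ∀ i, ∃ a ∈ f i, G.Adj u a) :
    G.IsCliqueModel (Fin.cons {u} f : Fin (n + 1) → Set V) where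
  nonempty i := by
    cases i using Fin.cases
    exacts [Set.singleton_nonempty u, by simpa using hf.nonempty _]
  connected i := by
    cases i using Fin.cases
    · rw [Fin.cons_zero]
      exact Connected.of_subsingleton
    · rw [Fin.cons_succ]
      exact hf.connected _
  disjoint i j hij := by
    cases i using Fin.cases <;> cases j using Fin.cases
    · exact absurd rfl hij
    · simpa using hu _
    · simpa using hu _
    · simpa using hf.disjoint (fun h => hij (congrArg Fin.succ h))
  exists_adj i j hij := by
    cases i using Fin.cases <;> cases j using Fin.cases
    · exact absurd rfl hij
    · simpa using hadj _
    · obtain ⟨a, ha, hua⟩ := hadj _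
      exact ⟨a, by simpa using ha, u, rfl, hua.symm⟩
    · simpa using hf.exists_adj (fun h => hij (congrArg Fin.succ h))

theorem IsCliqueModel.cons_of_subset_neighborSet {n : ℕ} {f : Fin n → Set V}
    (hf : G.IsCliqueModel f) {u : V} (hu : ∀ i, f i ⊆ G.neighborSet u) :
    G.IsCliqueModel (Fin.cons {u} f : Fin (n + 1) → Set V) :=
  hf.cons (fun i h => G.irrefl (hu i h)) fun i =>
    (hf.nonempty i).imp fun _ ha => ⟨ha, hu i ha⟩

theorem Walk.exists_eq_cons_cons_concat {a b : V} (c : G.Walk a b) (h : 3 ≤ c.length) :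
    ∃ (x y z : V) (h₁ : G.Adj a x) (h₂ : G.Adj x y) (q : G.Walk y z) (h₃ : G.Adj z b),
      c = cons h₁ (cons h₂ (q.concat h₃)) := by
  rcases c with _ | ⟨h₁, _ | ⟨h₂, _ | ⟨h₃, r⟩⟩⟩
  · simp at h
  · simp at h
  · simp at h
  · obtain ⟨z, q, h₃', hq⟩ := exists_cons_eq_concat h₃ r
    exact ⟨_, _, z, h₁, h₂, q, h₃', by rw [hq]⟩

theorem Walk.IsCycle.exists_isCliqueModel_fin_three {w : V} {c : G.Walk w w}
    (hc : c.IsCycle) :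
    ∃ f : Fin 3 → Set V, G.IsCliqueModel f ∧ ∀ i, f i ⊆ {a | a ∈ c.support} := by
  obtain ⟨x, y, z, h₁, h₂, q, h₃, rfl⟩ := c.exists_eq_cons_cons_concat hc.three_le_length
  have hnodup := hc.support_nodup
  simp only [support_cons, support_concat, List.tail_cons, List.nodup_cons, List.mem_append,
    List.mem_singleton, not_or, List.nodup_append, List.not_mem_nil, List.nodup_nil,
    forall_eq] at hnodup
  obtain ⟨⟨hxq, hxw⟩, -, -, hwq⟩ := hnodup
  have hK2 := (q.isCliqueModel_support (ι := Fin 1)).cons (u := x) (fun _ => hxq)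
    fun _ => ⟨y, q.start_mem_support, h₂⟩
  refine ⟨_, hK2.cons (u := w) ?_ ?_, ?_⟩
  · intro i
    cases i using Fin.cases
    · simpa using Ne.symm hxw
    · exact fun h => hwq w h rfl
  · intro i
    cases i using Fin.cases
    · exact ⟨x, rfl, h₁⟩
    · exact ⟨z, by simp, h₃.symm⟩
  · simp only [Fin.forall_fin_succ, Fin.cons_zero, Fin.cons_succ]
    simp +contextual [Set.subset_def]

end SimpleGraph

/-- If a simple graph `G` has an edge `{u, v}` and a cycle all of whose vertices lie in
`N(u) ∩ N(v)`, then `G` has a `K₅` minor; in particular `G` is not planar. -/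
theorem k5_minor_of_cycle_in_common_nbhd {V : Type*} (G : SimpleGraph V) (u v : V)
    (huv : G.Adj u v) (w : V) (c : G.Walk w w) (hc : c.IsCycle)
    (hsupp : ∀ x ∈ c.support, x ∈ G.neighborSet u ∩ G.neighborSet v) :
    (completeGraph (Fin 5)).IsMinor G ∧ ¬ G.IsPlanar := by
  obtain ⟨f, hf, hfc⟩ := hc.exists_isCliqueModel_fin_three
  have hN : ∀ i, f i ⊆ G.neighborSet u ∩ G.neighborSet v := fun i a ha => hsupp a (hfc i ha)
  have hK4 := hf.cons_of_subset_neighborSet fun i => (hN i).trans Set.inter_subset_right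
  have hK5 := hK4.cons_of_subset_neighborSet (u := u) <|
    Fin.cases (by simpa using huv) fun i => by simpa using (hN i).trans Set.inter_subset_left
  have hminor := hK5.completeGraph_isMinor
  exact ⟨hminor, fun hG => hG.1 hminor⟩
end
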